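/- Let V be a vector space with a nondegenerate alternating or σ-hermitian form (·,·), and let U ≤ U' ≤ V with U' ≤ U^⊥. Let A be a complement of U in U' and define the form (a+U, b+U)' = (a,b) on U'/U (for a,b ∈ A). Then for every subspace W with U ≤ W ≤ U', one has (⟨W^⊥, U⟩ ∩ U')/U = ((⟨W, U⟩ ∩ U')/U)^⊥' . In particular, the perp in U'/U of the image of W is the image of W^⊥. -/
import Mathlib


variable {F : Type*} [Field F]

/-- The orthogonal complement of a submodule with respect to a sesquilinear form. -/
def sesqPerp {M : Type*} [AddCommGroup M] [Module F M] {σ : F →+* F}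
    (B : M →ₗ[F] M →ₛₗ[σ] F) (A : Submodule F M) : Submodule F M where
  carrier := {v | ∀ a ∈ A, B v a = 0}
  add_mem' := by
    intro x y hx hy a ha
    simp [map_add, hx a ha, hy a ha]
  zero_mem' := by intro a _; simp
  smul_mem' := by
    intro c x hx a ha
    simp [map_smul, hx a ha]

/-- Let `(·,·)` be a nondegenerate `(σ,ε)`-hermitian form on `V`, let
`U ≤ U' ≤ U^⊥`, and let `B'` be the induced form on `U'/U` (so `B'(x+U, y+U) = B(x,y)`).
Then for every `U ≤ W ≤ U'`, the image of `⟨W^⊥, U⟩ ⊓ U'` in `U'/U` equals the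
`B'`-orthogonal complement of the image of `W`. -/
theorem perp_of_induced_form {V : Type*} [AddCommGroup V] [Module F V]
    [FiniteDimensional F V] {σ : F →+* F} (hσ : σ.comp σ = RingHom.id F)
    (B : V →ₗ[F] V →ₛₗ[σ] F) (ε : F) (hε : ε = 1 ∨ ε = -1)
    (hherm : ∀ x y : V, B x y = ε * σ (B y x))
    (hnd : sesqPerp B ⊤ = ⊥)
    (U U' : Submodule F V) (hUU' : U ≤ U') (hiso : U' ≤ sesqPerp B U)
    (B' : (↥U' ⧸ U.comap U'.subtype) →ₗ[F] (↥U' ⧸ U.comap U'.subtype) →ₛₗ[σ] F)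
    (hB' : ∀ x y : ↥U',
      B' (Submodule.mkQ (U.comap U'.subtype) x) (Submodule.mkQ (U.comap U'.subtype) y)
        = B (x : V) (y : V)) :
    ∀ W : Submodule F V, U ≤ W → W ≤ U' →
      Submodule.map (Submodule.mkQ (U.comap U'.subtype))
          (((sesqPerp B W ⊔ U) ⊓ U').comap U'.subtype) =
        sesqPerp B'
          (Submodule.map (Submodule.mkQ (U.comap U'.subtype)) (W.comap U'.subtype)) := by
  intro W hUW hWU'
  apply le_antisymm
  · rintro _ ⟨x, hx, rfl⟩
    rintro a ⟨w, hw, rfl⟩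
    rw [hB']
    obtain ⟨hx1, hx2⟩ := Submodule.mem_inf.mp (Submodule.mem_comap.mp hx)
    obtain ⟨p, hp, u, hu, hpu⟩ := Submodule.mem_sup.mp hx1
    have hw' : (w : V) ∈ W := hw
    have h1 : B p (w : V) = 0 := hp _ hw'
    have h2 : B u (w : V) = 0 := by
      rw [hherm, hiso w.2 u hu]
      simp
    rw [show (x:V) = p + u from hpu.symm, map_add, LinearMap.add_apply, h1, h2, add_zero]
  · intro c hc
    obtain ⟨x, rfl⟩ := Submodule.mkQ_surjective _ c
    refine ⟨x, Submodule.mem_comap.mpr (Submodule.mem_inf.mpr ⟨?_, x.2⟩), rfl⟩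
    apply Submodule.mem_sup_left
    intro w hw
    have := hc (Submodule.mkQ _ ⟨w, hWU' hw⟩) ⟨⟨w, hWU' hw⟩, hw, rfl⟩
    rwa [hB'] at this
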